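/- arXiv:2112.13257 — 5 statements merged into one kernel-verified Lean document; each statement's English description precedes it below -/
import Mathlib

section
/- The spectral radius of R̄ − 1_n π^T, i.e., the maximum modulus among the complex eigenvalues of R̄ − 1_n π^T, is strictly less than 1. -/
open Matrix Filter
open scoped Kronecker

noncomputable section

/-- Euclidean norm on `ι → ℝ`. -/
def eucNorm {ι : Type*} [Fintype ι] (z : ι → ℝ) : ℝ := Real.sqrt (∑ i, z i ^ 2)

/-- Spectral norm (operator 2-norm) of a square real matrix. -/
def specNorm {ι : Type*} [Fintype ι] (A : Matrix ι ι ℝ) : ℝ :=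
  sSup {c : ℝ | ∃ z : ι → ℝ, eucNorm z ≤ 1 ∧ c = eucNorm (A.mulVec z)}

/-- Matrix norm induced by a vector norm `N`: `sup_{z ≠ 0} N (A z) / N z`. -/
def opNorm {ι : Type*} [Fintype ι] (N : (ι → ℝ) → ℝ) (A : Matrix ι ι ℝ) : ℝ :=
  sSup {c : ℝ | ∃ z : ι → ℝ, z ≠ 0 ∧ c = N (A.mulVec z) / N z}

/-- `g` is the gradient of `f : ℝ^p → ℝ`. -/
def IsGradient {p : ℕ} (f : (Fin p → ℝ) → ℝ) (g : (Fin p → ℝ) → Fin p → ℝ) : Prop :=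
  ∀ x, HasFDerivAt f (∑ j, g x j • (ContinuousLinearMap.proj j : (Fin p → ℝ) →L[ℝ] ℝ)) x

/-- `R = R̄ ⊗ I_p`. -/
def RK (n p : ℕ) (Rb : Matrix (Fin n) (Fin n) ℝ) :
    Matrix (Fin n × Fin p) (Fin n × Fin p) ℝ :=
  Rb ⊗ₖ (1 : Matrix (Fin p) (Fin p) ℝ)

/-- `V_∞ = (1_n π^T) ⊗ I_p`. -/
def VinfK (n p : ℕ) (π : Fin n → ℝ) :
    Matrix (Fin n × Fin p) (Fin n × Fin p) ℝ :=
  (Matrix.of (fun _ j => π j) : Matrix (Fin n) (Fin n) ℝ) ⊗ₖ (1 : Matrix (Fin p) (Fin p) ℝ)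

/-- `V(k) = R̄^k ⊗ I_p`. -/
def VK (n p : ℕ) (Rb : Matrix (Fin n) (Fin n) ℝ) (k : ℕ) :
    Matrix (Fin n × Fin p) (Fin n × Fin p) ℝ :=
  (Rb ^ k) ⊗ₖ (1 : Matrix (Fin p) (Fin p) ℝ)

/-- `Ṽ(k)⁻¹ = diag(((R̄^k)_{11})⁻¹, …, ((R̄^k)_{nn})⁻¹) ⊗ I_p`. -/
def VtinvK (n p : ℕ) (Rb : Matrix (Fin n) (Fin n) ℝ) (k : ℕ) :
    Matrix (Fin n × Fin p) (Fin n × Fin p) ℝ :=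
  Matrix.diagonal (fun q => ((Rb ^ k) q.1 q.1)⁻¹)

/-- `∇f(z) = (∇f_1(z_1), …, ∇f_n(z_n))` block-wise. -/
def gradf {n p : ℕ} (g : Fin n → (Fin p → ℝ) → Fin p → ℝ) (z : Fin n × Fin p → ℝ) :
    Fin n × Fin p → ℝ :=
  fun q => g q.1 (fun j => z (q.1, j)) q.2

/-- `x*_vec = 1_n ⊗ x*`. -/
def starVec (n p : ℕ) (xstar : Fin p → ℝ) : Fin n × Fin p → ℝ := fun q => xstar q.2

end

/-!
If `(R̄ - 1 πᵀ) v = μ v` with `μ ≠ 0`, then `πᵀ v = 0` because `πᵀ` annihilates `R̄ - 1 πᵀ`, and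
hence `R̄ v = μ v`. Gershgorin's theorem places `μ` in a disc centred at some `r_ii > 0` of radius
`1 - r_ii`, which lies in the closed unit disc and meets the unit circle only at `1`. If `|μ| ≥ 1`
then `μ = 1`, and by the maximum principle for `R̄` (irreducibility spreads a maximum of the real
and imaginary parts of `v` to every index) `v` is constant; then `πᵀ v = 0` forces `v = 0`.
-/

theorem Complex.norm_lt_one_or_eq_one_of_norm_sub_ofReal_le {μ : ℂ} {a : ℝ} (ha : 0 < a)
    (h : ‖μ - a‖ ≤ 1 - a) :
    ‖μ‖ < 1 ∨ μ = 1 := by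
  refine or_iff_not_imp_left.2 fun hμ => ?_
  have hnorm : ‖μ‖ ≤ 1 :=
    calc ‖μ‖ = ‖(μ - a) + a‖ := by rw [sub_add_cancel]
      _ ≤ ‖μ - a‖ + a :=
        (norm_add_le _ _).trans_eq (by rw [Complex.norm_real, Real.norm_of_nonneg ha.le])
      _ ≤ 1 := by linarith
  have hunit : μ.re * μ.re + μ.im * μ.im = 1 := by
    rw [← Complex.normSq_apply, ← Complex.sq_norm, le_antisymm hnorm (not_lt.1 hμ), one_pow]
  have hdisc : (μ.re - a) * (μ.re - a) + μ.im * μ.im ≤ (1 - a) ^ 2 := by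
    have := pow_le_pow_left₀ (norm_nonneg _) h 2
    rwa [Complex.sq_norm, Complex.normSq_apply, Complex.sub_re, Complex.sub_im, Complex.ofReal_re,
      Complex.ofReal_im, sub_zero] at this
  have hre : μ.re = 1 := by nlinarith
  have him : μ.im = 0 := by nlinarith
  exact Complex.ext hre him

namespace Matrix

variable {n : Type*} [Fintype n]

theorem mulVec_eq_of_sub_vecMulVec_mulVec_eq {K : Type*} [CommRing K] [NoZeroDivisors K]
    {A : Matrix n n K} {π v : n → K} {μ : K} (hπA : π ᵥ* A = π) (hπ1 : π ⬝ᵥ 1 = 1) (hμ : μ ≠ 0)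
    (h : (A - vecMulVec 1 π) *ᵥ v = μ • v) : π ⬝ᵥ v = 0 ∧ A *ᵥ v = μ • v := by
  have hπv : π ⬝ᵥ v = 0 := by
    have hπ_mul_sub : π ᵥ* (A - vecMulVec 1 π) = 0 := by
      rw [vecMul_sub, vecMul_vecMulVec, hπA, hπ1, one_smul, sub_self]
    have : μ * (π ⬝ᵥ v) = 0 := by
      rw [← smul_eq_mul, ← dotProduct_smul, ← h, dotProduct_mulVec, hπ_mul_sub, zero_dotProduct]
    exact (mul_eq_zero.1 this).resolve_left hμ
  refine ⟨hπv, ?_⟩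
  rw [← h, sub_mulVec, vecMulVec_mulVec, hπv, MulOpposite.op_zero, zero_smul, sub_zero]

theorem pow_apply_eq_zero_of_apply_eq_zero [DecidableEq n] {R : Type*} [Semiring R]
    {A : Matrix n n R} {S : Set n} (hS : ∀ i ∈ S, ∀ j ∉ S, A i j = 0) (k : ℕ) :
    ∀ i ∈ S, ∀ j ∉ S, (A ^ k) i j = 0 := by
  induction k with
  | zero =>
    intro i hi j hj
    exact one_apply_ne (ne_of_mem_of_not_mem hi hj)
  | succ k ih =>
    intro i hi j hj
    rw [pow_succ, mul_apply]
    refine Finset.sum_eq_zero fun l _ => ?_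
    by_cases hl : l ∈ S
    · rw [hS l hl j hj, mul_zero]
    · rw [ih i hi l hl, zero_mul]

variable [DecidableEq n] {A : Matrix n n ℝ}

theorem norm_lt_one_or_eq_one_of_hasEigenvalue (hA : A ∈ rowStochastic ℝ n)
    (hdiag : ∀ i, 0 < A i i) {μ : ℂ}
    (hμ : Module.End.HasEigenvalue (toLin' (A.map Complex.ofReal)) μ) : ‖μ‖ < 1 ∨ μ = 1 := by
  obtain ⟨k, hk⟩ := eigenvalue_mem_ball hμ
  have hradius : ∑ j ∈ Finset.univ.erase k, ‖A.map Complex.ofReal k j‖ = 1 - A k k := by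
    simp_rw [map_apply, Complex.norm_real, Real.norm_of_nonneg (nonneg_of_mem_rowStochastic hA)]
    rw [Finset.sum_erase_eq_sub (Finset.mem_univ k), sum_row_of_mem_rowStochastic hA]
  rw [Metric.mem_closedBall, dist_eq_norm, hradius] at hk
  exact Complex.norm_lt_one_or_eq_one_of_norm_sub_ofReal_le (hdiag k) hk

theorem apply_eq_of_mulVec_eq_self_of_forall_le (hA : A ∈ rowStochastic ℝ n) {u : n → ℝ}
    (hu : A *ᵥ u = u) {i j : n} (hmax : ∀ l, u l ≤ u i) (hij : A i j ≠ 0) : u j = u i := by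
  have hsum : ∑ l, A i l * (u i - u l) = 0 := by
    simp_rw [mul_sub]
    rw [Finset.sum_sub_distrib, ← Finset.sum_mul, sum_row_of_mem_rowStochastic hA, one_mul,
      ← dotProduct, ← mulVec, hu, sub_self]
  have hterm := (Finset.sum_eq_zero_iff_of_nonneg fun l _ =>
    mul_nonneg (nonneg_of_mem_rowStochastic hA) (sub_nonneg.2 (hmax l))).1 hsum j
    (Finset.mem_univ j)
  linarith [(mul_eq_zero.1 hterm).resolve_left hij]

theorem eq_of_mulVec_eq_self (hA : A ∈ rowStochastic ℝ n)
    (hirr : ∀ i j, ∃ k : ℕ, 0 < (A ^ k) i j) {u : n → ℝ} (hu : A *ᵥ u = u) (i j : n) :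
    u i = u j := by
  have : Nonempty n := ⟨i⟩
  obtain ⟨m, -, hm⟩ := Finset.exists_max_image Finset.univ u Finset.univ_nonempty
  have hclosed : ∀ i ∈ {l | u l = u m}, ∀ j ∉ {l | u l = u m}, A i j = 0 :=
    fun i hi j hj => by_contra fun hij => hj <|
      (apply_eq_of_mulVec_eq_self_of_forall_le hA hu
        (fun l => hi ▸ hm l (Finset.mem_univ l)) hij).trans hi
  have hconst : ∀ l, u l = u m := fun l => by_contra fun hl => by
    obtain ⟨k, hk⟩ := hirr m l
    exact hk.ne' (pow_apply_eq_zero_of_apply_eq_zero hclosed k m rfl l hl)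
  rw [hconst i, hconst j]

theorem eq_of_map_ofReal_mulVec_eq_self (hA : A ∈ rowStochastic ℝ n)
    (hirr : ∀ i j, ∃ k : ℕ, 0 < (A ^ k) i j) {v : n → ℂ} (hv : A.map Complex.ofReal *ᵥ v = v)
    (i j : n) : v i = v j := by
  have hre : A *ᵥ (fun l => (v l).re) = fun l => (v l).re := funext fun l => by
    simpa [mulVec, dotProduct, Complex.re_sum] using congrArg Complex.re (congrFun hv l)
  have him : A *ᵥ (fun l => (v l).im) = fun l => (v l).im := funext fun l => by
    simpa [mulVec, dotProduct, Complex.im_sum] using congrArg Complex.im (congrFun hv l)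
  exact Complex.ext (eq_of_mulVec_eq_self hA hirr hre i j) (eq_of_mulVec_eq_self hA hirr him i j)

end Matrix

theorem stmt1_general (n : ℕ) (Rb : Matrix (Fin n) (Fin n) ℝ)
    (hnonneg : ∀ i j, 0 ≤ Rb i j) (hrow : ∀ i, ∑ j, Rb i j = 1)
    (hdiag : ∀ i, 0 < Rb i i)
    (hirr : ∀ i j, ∃ k : ℕ, 0 < (Rb ^ k) i j)
    (π : Fin n → ℝ) (hπsum : ∑ i, π i = 1)
    (hπstat : Matrix.vecMul π Rb = π) :
    ∀ lam : ℂ,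
      (∃ v : Fin n → ℂ, v ≠ 0 ∧
          ((Rb - (Matrix.of (fun _ j => π j) : Matrix (Fin n) (Fin n) ℝ)).map
              (Complex.ofReal ·)).mulVec v = lam • v) →
        ‖lam‖ < 1 := by
  rintro μ ⟨v, hv, heig⟩
  by_contra! hμ
  have hR : Rb ∈ rowStochastic ℝ (Fin n) := mem_rowStochastic_iff_sum.2 ⟨hnonneg, hrow⟩
  have hμ0 : μ ≠ 0 := by rintro rfl; norm_num at hμ
  set πc : Fin n → ℂ := Complex.ofReal ∘ π
  have hπstatC : πc ᵥ* Rb.map Complex.ofReal = πc := funext fun j =>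
    (RingHom.map_vecMul Complex.ofRealHom Rb π j).symm.trans (congrArg _ (congrFun hπstat j))
  have hπsumC : πc ⬝ᵥ 1 = 1 := by simpa [dotProduct, πc] using congrArg Complex.ofReal hπsum
  have heigC : (Rb.map Complex.ofReal - vecMulVec 1 πc) *ᵥ v = μ • v := by
    convert heig using 2; ext i j; simp [vecMulVec, πc]
  obtain ⟨hπv, hRv⟩ := mulVec_eq_of_sub_vecMulVec_mulVec_eq hπstatC hπsumC hμ0 heigC
  have hμ1 : μ = 1 := (norm_lt_one_or_eq_one_of_hasEigenvalue hR hdiag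
    (Module.End.hasEigenvalue_of_hasEigenvector
      ⟨Module.End.mem_eigenspace_iff.2 hRv, hv⟩)).resolve_left hμ.not_gt
  have hconst := eq_of_map_ofReal_mulVec_eq_self hR hirr (by rw [hRv, hμ1, one_smul])
  refine hv (funext fun i => ?_)
  have hπv_const : πc ⬝ᵥ v = v i := by
    simp_rw [dotProduct, hconst _ i, ← Finset.sum_mul, πc, Function.comp_apply,
      ← Complex.ofReal_sum, hπsum, Complex.ofReal_one, one_mul]
  rw [← hπv_const, hπv, Pi.zero_apply]

/-- every complex eigenvalue of `R̄ − 1_n π^T` has modulus `< 1`,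
i.e. the spectral radius of `R̄ − 1_n π^T` is strictly less than 1. -/
theorem stmt1 (n : ℕ) (hn : 1 ≤ n) (Rb : Matrix (Fin n) (Fin n) ℝ)
    (hnonneg : ∀ i j, 0 ≤ Rb i j) (hrow : ∀ i, ∑ j, Rb i j = 1)
    (hdiag : ∀ i, 0 < Rb i i)
    (hirr : ∀ i j, ∃ k : ℕ, 0 < (Rb ^ k) i j)
    (π : Fin n → ℝ) (hπpos : ∀ i, 0 < π i) (hπsum : ∑ i, π i = 1)
    (hπstat : Matrix.vecMul π Rb = π) :
    ∀ lam : ℂ,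
      (∃ v : Fin n → ℂ, v ≠ 0 ∧
          ((Rb - (Matrix.of (fun _ j => π j) : Matrix (Fin n) (Fin n) ℝ)).map
              (Complex.ofReal ·)).mulVec v = lam • v) →
        ‖lam‖ < 1 :=
  stmt1_general n Rb hnonneg hrow hdiag hirr π hπsum hπstat
end

section
/- There exist a norm N on ℝ^{np} satisfying ‖z‖ ≤ N(z) for all z ∈ ℝ^{np} (where ‖·‖ is the Euclidean norm) and a constant σ ∈ (0,1) such that N(Rz − V_∞ z) ≤ σ · N(z − V_∞ z) for every z ∈ ℝ^{np}. -/
open Matrix Filter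
open scoped Kronecker

/-!
With `M = (R̄ - 1 π^T) ⊗ I_p` one has `R z - V_∞ z = M (z - V_∞ z)` and
`M^k = (R̄^k - 1 π^T) ⊗ I_p`. Irreducibility and the positive diagonal make some power `R̄^m`
entrywise positive, so Dobrushin's contraction of oscillations gives `R̄^k → 1 π^T`, and hence
`‖M^K‖ ≤ 1/2` in the Euclidean norm for some `K`. Choosing `σ^K = 1/2`, the weighted norm
`N z = ∑_{j<K} σ^{-j} ‖M^j z‖` satisfies `N (M z) ≤ σ N z` by telescoping.
-/

open Finset

section EucNorm

variable {ι : Type*} [Fintype ι]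

lemma eucNorm_eq_norm_toLp (z : ι → ℝ) : eucNorm z = ‖WithLp.toLp 2 z‖ := by
  simp [eucNorm, EuclideanSpace.norm_eq]

lemma eucNorm_nonneg (z : ι → ℝ) : 0 ≤ eucNorm z := Real.sqrt_nonneg _

lemma eucNorm_add_le (z w : ι → ℝ) : eucNorm (z + w) ≤ eucNorm z + eucNorm w := by
  simpa only [eucNorm_eq_norm_toLp, WithLp.toLp_add] using norm_add_le _ _

lemma eucNorm_smul (a : ℝ) (z : ι → ℝ) : eucNorm (a • z) = |a| * eucNorm z := by
  simp only [eucNorm_eq_norm_toLp, WithLp.toLp_smul, norm_smul, Real.norm_eq_abs]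

lemma eucNorm_eq_zero {z : ι → ℝ} : eucNorm z = 0 ↔ z = 0 := by
  simp [eucNorm_eq_norm_toLp]

lemma eucNorm_sq (z : ι → ℝ) : eucNorm z ^ 2 = ∑ i, z i ^ 2 :=
  Real.sq_sqrt (sum_nonneg fun _ _ => sq_nonneg _)

lemma abs_le_eucNorm (z : ι → ℝ) (i : ι) : |z i| ≤ eucNorm z := by
  rw [← Real.sqrt_sq_eq_abs]
  exact Real.sqrt_le_sqrt (single_le_sum (fun j _ => sq_nonneg (z j)) (mem_univ i))

lemma eucNorm_le_sqrt_card_mul {b : ℝ} (hb : 0 ≤ b) {z : ι → ℝ} (h : ∀ i, |z i| ≤ b) :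
    eucNorm z ≤ √(Fintype.card ι) * b := by
  rw [eucNorm, ← Real.sqrt_sq hb, ← Real.sqrt_mul (Nat.cast_nonneg _)]
  refine Real.sqrt_le_sqrt ?_
  calc ∑ i, z i ^ 2 ≤ ∑ _i : ι, b ^ 2 :=
        sum_le_sum fun i _ => by simpa only [sq_abs] using pow_le_pow_left₀ (abs_nonneg _) (h i) 2
    _ = Fintype.card ι * b ^ 2 := by simp

end EucNorm

section Kronecker

variable {m ι : Type*} [Fintype m] [Fintype ι] [DecidableEq ι]

lemma kronecker_one_pow [DecidableEq m] (A : Matrix m m ℝ) (k : ℕ) :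
    (A ⊗ₖ (1 : Matrix ι ι ℝ)) ^ k = (A ^ k) ⊗ₖ (1 : Matrix ι ι ℝ) := by
  induction k with
  | zero => simp
  | succ k ih => rw [pow_succ, pow_succ, ih, ← mul_kronecker_mul, one_mul]

lemma kronecker_one_mulVec_apply (A : Matrix m m ℝ) (z : m × ι → ℝ) (i : m) (j : ι) :
    (A ⊗ₖ (1 : Matrix ι ι ℝ) *ᵥ z) (i, j) = (A *ᵥ fun k => z (k, j)) i := by
  simp [mulVec, dotProduct, Fintype.sum_prod_type, one_apply]

lemma eucNorm_kronecker_one_mulVec_le {C : ℝ} (hC : 0 ≤ C) {A : Matrix m m ℝ}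
    (h : ∀ x, eucNorm (A *ᵥ x) ≤ C * eucNorm x) (z : m × ι → ℝ) :
    eucNorm (A ⊗ₖ (1 : Matrix ι ι ℝ) *ᵥ z) ≤ C * eucNorm z := by
  have hcols : ∀ w : m × ι → ℝ, eucNorm w ^ 2 = ∑ j, eucNorm (fun k => w (k, j)) ^ 2 := by
    intro w
    simp only [eucNorm_sq]
    exact Fintype.sum_prod_type_right _
  refine (pow_le_pow_iff_left₀ (eucNorm_nonneg _) (mul_nonneg hC (eucNorm_nonneg _))
    two_ne_zero).1 ?_
  rw [mul_pow, hcols, hcols, mul_sum]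
  refine sum_le_sum fun j _ => ?_
  simp only [kronecker_one_mulVec_apply, ← mul_pow]
  exact pow_le_pow_left₀ (eucNorm_nonneg _) (h _) 2

end Kronecker

section AdaptedNorm

variable {ι : Type*} [Fintype ι] [DecidableEq ι] (M : Matrix ι ι ℝ) (σ : ℝ) (K : ℕ)

noncomputable def adaptedNorm (z : ι → ℝ) : ℝ :=
  ∑ j ∈ range K, σ⁻¹ ^ j * eucNorm (M ^ j *ᵥ z)

lemma adaptedNorm_add_le (hσ : 0 ≤ σ) (z w : ι → ℝ) :
    adaptedNorm M σ K (z + w) ≤ adaptedNorm M σ K z + adaptedNorm M σ K w := by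
  rw [adaptedNorm, adaptedNorm, adaptedNorm, ← sum_add_distrib]
  refine sum_le_sum fun j _ => ?_
  rw [← mul_add, mulVec_add]
  exact mul_le_mul_of_nonneg_left (eucNorm_add_le _ _) (by positivity)

lemma adaptedNorm_smul (a : ℝ) (z : ι → ℝ) :
    adaptedNorm M σ K (a • z) = |a| * adaptedNorm M σ K z := by
  simp only [adaptedNorm, mulVec_smul, eucNorm_smul, mul_sum]
  exact sum_congr rfl fun j _ => by ring

lemma eucNorm_le_adaptedNorm (hσ : 0 ≤ σ) (hK : 0 < K) (z : ι → ℝ) :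
    eucNorm z ≤ adaptedNorm M σ K z := by
  calc eucNorm z = σ⁻¹ ^ 0 * eucNorm (M ^ 0 *ᵥ z) := by simp
    _ ≤ adaptedNorm M σ K z := single_le_sum (f := fun j => σ⁻¹ ^ j * eucNorm (M ^ j *ᵥ z))
        (fun j _ => mul_nonneg (by positivity) (eucNorm_nonneg _)) (mem_range.2 hK)

lemma adaptedNorm_eq_zero (hσ : 0 ≤ σ) (hK : 0 < K) {z : ι → ℝ} :
    adaptedNorm M σ K z = 0 ↔ z = 0 := by
  refine ⟨fun h => eucNorm_eq_zero.1 ?_, ?_⟩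
  · exact le_antisymm (h ▸ eucNorm_le_adaptedNorm M σ K hσ hK z) (eucNorm_nonneg z)
  · rintro rfl
    simp [adaptedNorm, eucNorm]

/-- Telescoping: multiplying by `M` shifts the weighted sum by one index, and the term that
falls off the end is controlled by the assumed contraction of `M ^ K`. -/
lemma adaptedNorm_mulVec_le (hσ : 0 < σ)
    (hM : ∀ w, eucNorm (M ^ K *ᵥ w) ≤ σ ^ K * eucNorm w) (w : ι → ℝ) :
    adaptedNorm M σ K (M *ᵥ w) ≤ σ * adaptedNorm M σ K w := by
  set f : ℕ → ℝ := fun j => σ⁻¹ ^ j * eucNorm (M ^ j *ᵥ w)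
  have hshift : adaptedNorm M σ K (M *ᵥ w) = σ * ∑ j ∈ range K, f (j + 1) := by
    rw [adaptedNorm, mul_sum]
    refine sum_congr rfl fun j _ => ?_
    rw [mulVec_mulVec, ← pow_succ]
    simp only [f, pow_succ σ⁻¹]
    field_simp
  have hlast : f K ≤ f 0 := by
    calc f K ≤ σ⁻¹ ^ K * (σ ^ K * eucNorm w) := mul_le_mul_of_nonneg_left (hM w) (by positivity)
      _ = f 0 := by simp [f, hσ.ne']
  have hsum := (sum_range_succ' f K).symm.trans (sum_range_succ f K)
  rw [hshift, adaptedNorm]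
  exact mul_le_mul_of_nonneg_left (by linarith) hσ.le

end AdaptedNorm

section Stochastic

variable {ι : Type*} [Fintype ι] {A S : Matrix ι ι ℝ} {π : ι → ℝ}

/-- The matrix `1 π^T`. -/
def stationaryProj (π : ι → ℝ) : Matrix ι ι ℝ := of fun _ j => π j

lemma stationaryProj_mulVec_apply (x : ι → ℝ) (i : ι) : (stationaryProj π *ᵥ x) i = π ⬝ᵥ x :=
  rfl

lemma stationaryProj_mul (hπA : π ᵥ* A = π) : stationaryProj π * A = stationaryProj π := by
  ext i j
  simpa [stationaryProj, mul_apply, vecMul, dotProduct] using congrFun hπA j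

lemma stationaryProj_mul_self (hπ : ∑ i, π i = 1) :
    stationaryProj π * stationaryProj π = stationaryProj π := by
  ext i j
  simp [stationaryProj, mul_apply, ← sum_mul, hπ]

/-- Dobrushin's contraction of the oscillation: writing `(S y)_i - (S y)_j` as
`∑ (S i k - δ) (y k - lo) - ∑ (S j k - δ) (y k - lo)`, the first sum is at most
`(1 - card ι * δ) D` and the second is nonnegative. -/
lemma mulVec_apply_sub_mulVec_apply_le {δ lo D : ℝ} (hδ : ∀ i j, δ ≤ S i j)
    (hS : ∀ i, ∑ j, S i j = 1) {y : ι → ℝ} (hlo : ∀ k, lo ≤ y k) (hhi : ∀ k, y k ≤ lo + D)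
    (i j : ι) : (S *ᵥ y) i - (S *ᵥ y) j ≤ (1 - Fintype.card ι * δ) * D := by
  have hrow : ∀ i, ∑ k, (S i k - δ) * (y k - lo) = (S *ᵥ y) i - lo - δ * ∑ k, (y k - lo) := by
    intro i
    simp only [mulVec, dotProduct, sub_mul, mul_sub, sum_sub_distrib, ← sum_mul, ← mul_sum, hS i,
      sum_const, card_univ, nsmul_eq_mul]
    ring
  have hupper : ∑ k, (S i k - δ) * (y k - lo) ≤ (1 - Fintype.card ι * δ) * D := by
    calc ∑ k, (S i k - δ) * (y k - lo) ≤ ∑ k, (S i k - δ) * D :=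
          sum_le_sum fun k _ => mul_le_mul_of_nonneg_left (by linarith [hhi k])
            (sub_nonneg.2 (hδ i k))
      _ = (1 - Fintype.card ι * δ) * D := by simp [← sum_mul, sum_sub_distrib, hS i]
  have hlower : 0 ≤ ∑ k, (S j k - δ) * (y k - lo) :=
    sum_nonneg fun k _ => mul_nonneg (sub_nonneg.2 (hδ j k)) (sub_nonneg.2 (hlo k))
  linarith [hrow i, hrow j]

lemma abs_sub_dotProduct_le {y : ι → ℝ} {E : ℝ} (hπ0 : ∀ i, 0 ≤ π i) (hπ : ∑ i, π i = 1)
    (hy : ∀ i j, |y i - y j| ≤ E) (i : ι) : |y i - π ⬝ᵥ y| ≤ E := by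
  have hdev : y i - π ⬝ᵥ y = ∑ j, π j * (y i - y j) := by
    simp [dotProduct, mul_sub, ← sum_mul, hπ, mul_comm]
  rw [hdev]
  calc |∑ j, π j * (y i - y j)| ≤ ∑ j, |π j * (y i - y j)| := abs_sum_le_sum_abs _ _
    _ ≤ ∑ j, π j * E := sum_le_sum fun j _ => by
        rw [abs_mul, abs_of_nonneg (hπ0 j)]
        exact mul_le_mul_of_nonneg_left (hy i j) (hπ0 j)
    _ = E := by rw [← sum_mul, hπ, one_mul]

variable [DecidableEq ι]

lemma mul_stationaryProj (hA : A ∈ rowStochastic ℝ ι) :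
    A * stationaryProj π = stationaryProj π := by
  ext i j
  simp [stationaryProj, mul_apply, ← sum_mul, sum_row_of_mem_rowStochastic hA]

lemma vecMul_pow_eq (hπA : π ᵥ* A = π) {k : ℕ} : π ᵥ* A ^ k = π := by
  induction k with
  | zero => simp
  | succ k ih => rw [pow_succ, ← vecMul_vecMul, ih, hπA]

lemma sub_stationaryProj_pow (hA : A ∈ rowStochastic ℝ ι) (hπA : π ᵥ* A = π)
    (hπ : ∑ i, π i = 1) {k : ℕ} (hk : 0 < k) :
    (A - stationaryProj π) ^ k = A ^ k - stationaryProj π := by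
  induction k, hk using Nat.le_induction with
  | base => simp
  | succ k _ ih =>
    rw [pow_succ, ih, sub_mul, mul_sub, mul_sub, mul_stationaryProj (pow_mem hA k),
      stationaryProj_mul hπA, stationaryProj_mul_self hπ, pow_succ]
    abel

lemma pow_apply_pos_of_le (hA : A ∈ rowStochastic ℝ ι) (hdiag : ∀ i, 0 < A i i)
    {k l : ℕ} (hkl : k ≤ l) {i j : ι} (h : 0 < (A ^ k) i j) : 0 < (A ^ l) i j := by
  induction l, hkl using Nat.le_induction with
  | base => exact h
  | succ l _ ih =>
    rw [pow_succ, mul_apply]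
    refine (mul_pos ih (hdiag j)).trans_le
      (single_le_sum (f := fun x => (A ^ l) i x * A x j) (fun x _ => ?_) (mem_univ j))
    exact mul_nonneg (nonneg_of_mem_rowStochastic (pow_mem hA l)) (nonneg_of_mem_rowStochastic hA)

lemma eventually_pow_apply_pos (hA : A ∈ rowStochastic ℝ ι) (hdiag : ∀ i, 0 < A i i)
    (hirr : ∀ i j, ∃ k : ℕ, 0 < (A ^ k) i j) :
    ∀ᶠ m in atTop, ∀ i j, 0 < (A ^ m) i j := by
  refine eventually_all.2 fun i => eventually_all.2 fun j => ?_
  obtain ⟨k, hk⟩ := hirr i j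
  exact eventually_atTop.2 ⟨k, fun l hkl => pow_apply_pos_of_le hA hdiag hkl hk⟩

lemma pow_mulVec_apply_sub_le [Nonempty ι] {δ D : ℝ} (hδ : ∀ i j, δ ≤ S i j)
    (hS : ∀ i, ∑ j, S i j = 1) {x : ι → ℝ} (hx : ∀ i j, x i - x j ≤ D) (k : ℕ) (i j : ι) :
    (S ^ k *ᵥ x) i - (S ^ k *ᵥ x) j ≤ (1 - Fintype.card ι * δ) ^ k * D := by
  induction k generalizing i j with
  | zero => simpa using hx i j
  | succ k ih =>
    obtain ⟨l, -, hl⟩ := exists_min_image univ (S ^ k *ᵥ x) univ_nonempty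
    rw [pow_succ', ← mulVec_mulVec, pow_succ', mul_assoc]
    exact mulVec_apply_sub_mulVec_apply_le hδ hS (fun k => hl k (mem_univ k))
      (fun m => by linarith [ih m l]) i j

lemma abs_pow_sub_stationaryProj_mulVec_le [Nonempty ι] {δ : ℝ} (hδ : ∀ i j, δ ≤ S i j)
    (hS : ∀ i, ∑ j, S i j = 1) (hπ0 : ∀ i, 0 ≤ π i) (hπ : ∑ i, π i = 1) (hπS : π ᵥ* S = π)
    (x : ι → ℝ) (k : ℕ) (i : ι) :
    |((S ^ k - stationaryProj π) *ᵥ x) i| ≤ (1 - Fintype.card ι * δ) ^ k * (2 * eucNorm x) := by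
  have hstat : π ⬝ᵥ (S ^ k *ᵥ x) = π ⬝ᵥ x := by rw [dotProduct_mulVec, vecMul_pow_eq hπS]
  have hosc : ∀ i j, x i - x j ≤ 2 * eucNorm x := fun i j => by
    linarith [abs_le.1 (abs_le_eucNorm x i), abs_le.1 (abs_le_eucNorm x j)]
  rw [sub_mulVec, Pi.sub_apply, stationaryProj_mulVec_apply, ← hstat]
  exact abs_sub_dotProduct_le hπ0 hπ (fun i j => abs_sub_le_iff.2
    ⟨pow_mulVec_apply_sub_le hδ hS hosc k i j, pow_mulVec_apply_sub_le hδ hS hosc k j i⟩) i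

lemma exists_pow_sub_stationaryProj_contract [Nonempty ι] (hA : A ∈ rowStochastic ℝ ι)
    (hdiag : ∀ i, 0 < A i i) (hirr : ∀ i j, ∃ k : ℕ, 0 < (A ^ k) i j) (hπ0 : ∀ i, 0 ≤ π i)
    (hπ : ∑ i, π i = 1) (hπA : π ᵥ* A = π) :
    ∃ K, 0 < K ∧ ∀ x, eucNorm ((A ^ K - stationaryProj π) *ᵥ x) ≤ 2⁻¹ * eucNorm x := by
  obtain ⟨m, hm, hpos⟩ :=
    ((eventually_gt_atTop 0).and (eventually_pow_apply_pos hA hdiag hirr)).exists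
  obtain ⟨⟨i₀, j₀⟩, -, hmin⟩ :=
    exists_min_image univ (fun q : ι × ι => (A ^ m) q.1 q.2) univ_nonempty
  have hδ : ∀ i j, (A ^ m) i₀ j₀ ≤ (A ^ m) i j := fun i j => hmin (i, j) (mem_univ _)
  have hrow : ∀ i, ∑ j, (A ^ m) i j = 1 := sum_row_of_mem_rowStochastic (pow_mem hA m)
  set n : ℝ := (Fintype.card ι : ℝ)
  set c := 1 - n * (A ^ m) i₀ j₀
  have hn : 0 < n := Nat.cast_pos.2 Fintype.card_pos
  have hc0 : 0 ≤ c := by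
    have := (sum_le_sum fun j _ => hδ i₀ j).trans_eq (hrow i₀)
    simp only [sum_const, card_univ, nsmul_eq_mul] at this
    linarith
  have hc1 : c < 1 := by nlinarith [hpos i₀ j₀]
  set ε := (4 * √n)⁻¹
  have hsqrt : 0 < √n := Real.sqrt_pos.2 hn
  obtain ⟨k, hk⟩ := exists_pow_lt_of_lt_one (show 0 < ε by positivity) hc1
  have hck : c ^ (k + 1) ≤ ε := (pow_le_pow_of_le_one hc0 hc1.le k.le_succ).trans hk.le
  refine ⟨m * (k + 1), by positivity, fun x => ?_⟩
  have hx := eucNorm_nonneg x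
  have hentry : ∀ i, |((A ^ (m * (k + 1)) - stationaryProj π) *ᵥ x) i| ≤ ε * (2 * eucNorm x) := by
    intro i
    rw [pow_mul]
    exact (abs_pow_sub_stationaryProj_mulVec_le hδ hrow hπ0 hπ (vecMul_pow_eq hπA) x (k + 1) i).trans
      (mul_le_mul_of_nonneg_right hck (by positivity))
  calc _ ≤ √n * (ε * (2 * eucNorm x)) := eucNorm_le_sqrt_card_mul (by positivity) hentry
    _ = 2⁻¹ * eucNorm x := by simp only [ε]; field_simp; norm_num

end Stochastic

lemma RK_mulVec_sub_VinfK_mulVec {n p : ℕ} {Rb : Matrix (Fin n) (Fin n) ℝ} {π : Fin n → ℝ}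
    (hRb : Rb ∈ rowStochastic ℝ (Fin n)) (hπ : ∑ i, π i = 1) (z : Fin n × Fin p → ℝ) :
    RK n p Rb *ᵥ z - VinfK n p π *ᵥ z =
      (Rb - stationaryProj π) ⊗ₖ (1 : Matrix (Fin p) (Fin p) ℝ) *ᵥ (z - VinfK n p π *ᵥ z) := by
  have hVinf : VinfK n p π = stationaryProj π ⊗ₖ (1 : Matrix (Fin p) (Fin p) ℝ) := rfl
  have hsplit : (Rb - stationaryProj π) ⊗ₖ (1 : Matrix (Fin p) (Fin p) ℝ) =
      RK n p Rb - VinfK n p π := by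
    ext
    simp [RK, hVinf, sub_mul]
  have hker : (Rb - stationaryProj π) ⊗ₖ (1 : Matrix (Fin p) (Fin p) ℝ) * VinfK n p π = 0 := by
    rw [hVinf, ← mul_kronecker_mul, sub_mul, mul_stationaryProj hRb, stationaryProj_mul_self hπ,
      sub_self, zero_kronecker]
  rw [mulVec_sub, mulVec_mulVec, hker, zero_mulVec, sub_zero, hsplit, sub_mulVec]

theorem stmt2_general (n p : ℕ) (hn : 1 ≤ n) (Rb : Matrix (Fin n) (Fin n) ℝ)
    (hnonneg : ∀ i j, 0 ≤ Rb i j) (hrow : ∀ i, ∑ j, Rb i j = 1)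
    (hdiag : ∀ i, 0 < Rb i i)
    (hirr : ∀ i j, ∃ k : ℕ, 0 < (Rb ^ k) i j)
    (π : Fin n → ℝ) (hπpos : ∀ i, 0 < π i) (hπsum : ∑ i, π i = 1)
    (hπstat : Matrix.vecMul π Rb = π) :
    ∃ (N : (Fin n × Fin p → ℝ) → ℝ) (σ : ℝ),
      (∀ z w, N (z + w) ≤ N z + N w) ∧
      (∀ (a : ℝ) z, N (a • z) = |a| * N z) ∧
      (∀ z, N z = 0 ↔ z = 0) ∧
      (∀ z, eucNorm z ≤ N z) ∧
      0 < σ ∧ σ < 1 ∧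
      ∀ z, N ((RK n p Rb).mulVec z - (VinfK n p π).mulVec z) ≤
        σ * N (z - (VinfK n p π).mulVec z) := by
  have : Nonempty (Fin n) := ⟨⟨0, hn⟩⟩
  have hRb : Rb ∈ rowStochastic ℝ (Fin n) := mem_rowStochastic_iff_sum.2 ⟨hnonneg, hrow⟩
  obtain ⟨K, hK, hcontract⟩ := exists_pow_sub_stationaryProj_contract hRb hdiag hirr
    (fun i => (hπpos i).le) hπsum hπstat
  set σ : ℝ := 2⁻¹ ^ (K : ℝ)⁻¹
  have hσ0 : 0 < σ := by positivity
  have hσ1 : σ < 1 := Real.rpow_lt_one (by norm_num) (by norm_num) (by positivity)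
  set M := (Rb - stationaryProj π) ⊗ₖ (1 : Matrix (Fin p) (Fin p) ℝ)
  have hMK : ∀ w, eucNorm (M ^ K *ᵥ w) ≤ σ ^ K * eucNorm w := by
    rw [Real.rpow_inv_natCast_pow (by norm_num) hK.ne', kronecker_one_pow,
      sub_stationaryProj_pow hRb hπstat hπsum hK]
    exact eucNorm_kronecker_one_mulVec_le (by norm_num) hcontract
  refine ⟨adaptedNorm M σ K, σ, adaptedNorm_add_le M σ K hσ0.le, adaptedNorm_smul M σ K,
    fun _ => adaptedNorm_eq_zero M σ K hσ0.le hK, eucNorm_le_adaptedNorm M σ K hσ0.le hK,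
    hσ0, hσ1, fun z => ?_⟩
  rw [RK_mulVec_sub_VinfK_mulVec hRb hπsum]
  exact adaptedNorm_mulVec_le M σ K hσ0 hMK _

/-- there exist a norm `N` on `ℝ^{np}` dominating the Euclidean norm and a
constant `σ ∈ (0,1)` such that `N(Rz − V_∞ z) ≤ σ N(z − V_∞ z)` for all `z`. -/
theorem stmt2 (n p : ℕ) (hn : 1 ≤ n) (hp : 1 ≤ p) (Rb : Matrix (Fin n) (Fin n) ℝ)
    (hnonneg : ∀ i j, 0 ≤ Rb i j) (hrow : ∀ i, ∑ j, Rb i j = 1)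
    (hdiag : ∀ i, 0 < Rb i i)
    (hirr : ∀ i j, ∃ k : ℕ, 0 < (Rb ^ k) i j)
    (π : Fin n → ℝ) (hπpos : ∀ i, 0 < π i) (hπsum : ∑ i, π i = 1)
    (hπstat : Matrix.vecMul π Rb = π) :
    ∃ (N : (Fin n × Fin p → ℝ) → ℝ) (σ : ℝ),
      (∀ z w, N (z + w) ≤ N z + N w) ∧
      (∀ (a : ℝ) z, N (a • z) = |a| * N z) ∧
      (∀ z, N z = 0 ↔ z = 0) ∧
      (∀ z, eucNorm z ≤ N z) ∧
      0 < σ ∧ σ < 1 ∧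
      ∀ z, N ((RK n p Rb).mulVec z - (VinfK n p π).mulVec z) ≤
        σ * N (z - (VinfK n p π).mulVec z) :=
  stmt2_general n p hn Rb hnonneg hrow hdiag hirr π hπpos hπsum hπstat
end

section
/- Let α, β > 0 with αβ ∈ (0,1) and set C̄ = (1−αβ)I_n + αβ R̄ and C = C̄ ⊗ I_p. Then C̄^k → 1_n π^T as k → ∞, and there exist a norm N on ℝ^{np} satisfying ‖z‖ ≤ N(z) for all z ∈ ℝ^{np} (where ‖·‖ is the Euclidean norm) and a constant σ ∈ (0,1) such that N(Cz − V_∞ z) ≤ σ · N(z − V_∞ z) for every z ∈ ℝ^{np}. -/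
open Matrix Filter
open scoped Kronecker

/-!
`C̄ = (1 - αβ) I + αβ R̄` is row-stochastic with a positive diagonal, so irreducibility of `R̄`
makes it primitive: some power `C̄ ^ m` has all entries at least `δ > 0`. Doeblin's argument shows
that such a power contracts the oscillation `max v - min v` by the factor `1 - n δ`; since
`π` is stationary, `(C̄ ^ k) i j - π j` is bounded by the oscillation of column `j` of `C̄ ^ k`,
whence `|(C̄ ^ k) i j - π j| ≤ c ρ ^ k` with `ρ < 1`.

For `k ≥ 1` the powers of `M = (C̄ - 1 πᵀ) ⊗ I` are `(C̄ ^ k - 1 πᵀ) ⊗ I`, so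
`‖M ^ k z‖ ≤ K ρ ^ k ‖z‖`, and for `ρ < σ < 1` the adapted norm `N z = ∑ₖ ‖M ^ k z‖ / σ ^ k`
dominates `‖z‖` and satisfies `N (M z) ≤ σ N z`. Finally `C z - V_∞ z = M (z - V_∞ z)` because
`(C̄ - 1 πᵀ) 1 πᵀ = 0`.
-/

open Finset

namespace Seminorm

variable {E : Type*} [AddCommGroup E] [Module ℝ E]

theorem exists_adapted (p : Seminorm ℝ E) (T : E →ₗ[ℝ] E) {K ρ σ : ℝ} (hρ : 0 ≤ ρ)
    (hρσ : ρ < σ) (hT : ∀ k x, p ((T ^ k) x) ≤ K * ρ ^ k * p x) :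
    ∃ q : Seminorm ℝ E, p ≤ q ∧ ∀ x, q (T x) ≤ σ * q x := by
  have hσ : 0 < σ := hρ.trans_lt hρσ
  set f : E → ℕ → ℝ := fun x k => p ((T ^ k) x) / σ ^ k
  have hf0 : ∀ x k, 0 ≤ f x k := fun x k => by positivity
  have hsum : ∀ x, Summable (f x) := fun x => by
    refine Summable.of_nonneg_of_le (hf0 x) (fun k => ?_)
      ((summable_geometric_of_lt_one (div_nonneg hρ hσ.le)
        ((div_lt_one hσ).2 hρσ)).mul_left (K * p x))
    calc f x k ≤ K * ρ ^ k * p x / σ ^ k := div_le_div_of_nonneg_right (hT k x) (by positivity)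
      _ = K * p x * (ρ / σ) ^ k := by rw [div_pow]; ring
  refine ⟨Seminorm.of (fun x => ∑' k, f x k) (fun x y => ?_) (fun a x => ?_), fun x => ?_,
    fun x => ?_⟩
  · refine ((hsum _).tsum_le_tsum (fun k => ?_) ((hsum x).add (hsum y))).trans_eq
      ((hsum x).tsum_add (hsum y))
    simp only [f, map_add, ← add_div]
    gcongr
    exact map_add_le_add p _ _
  · simp only [f, map_smul, map_smul_eq_mul, mul_div_assoc, tsum_mul_left]
  · show p x ≤ ∑' k, f x k
    simpa [f] using (hsum x).le_tsum 0 (fun k _ => hf0 x k)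
  · have hshift : ∀ k, f (T x) k = σ * f x (k + 1) := fun k => by
      simp only [f, pow_succ, Module.End.mul_apply]
      field_simp
    show ∑' k, f (T x) k ≤ σ * ∑' k, f x k
    rw [tsum_congr hshift, tsum_mul_left, (hsum x).tsum_eq_zero_add]
    gcongr
    exact le_add_of_nonneg_left (hf0 x 0)

end Seminorm

section Euclidean

variable {ι : Type*} [Fintype ι]

variable (ι) in
noncomputable def eucSeminorm : Seminorm ℝ (ι → ℝ) :=
  (normSeminorm ℝ (EuclideanSpace ℝ ι)).comp (WithLp.linearEquiv 2 ℝ (ι → ℝ)).symm.toLinearMap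

lemma eucSeminorm_apply (z : ι → ℝ) : eucSeminorm ι z = eucNorm z := by
  simp [eucSeminorm, eucNorm_eq_norm_toLp]

lemma eucNorm_mulVec_le (B : Matrix ι ι ℝ) {b : ℝ} (hB : ∀ q r, |B q r| ≤ b) (z : ι → ℝ) :
    eucNorm (B *ᵥ z) ≤ Fintype.card ι * b * eucNorm z := by
  obtain hι | ⟨⟨q⟩⟩ := isEmpty_or_nonempty ι
  · simp [eucNorm]
  have hb : 0 ≤ b := (abs_nonneg _).trans (hB q q)
  rw [eucNorm, ← Real.sqrt_sq (by positivity : 0 ≤ (Fintype.card ι : ℝ) * b),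
    eucNorm, ← Real.sqrt_mul (sq_nonneg _)]
  refine Real.sqrt_le_sqrt ?_
  calc ∑ q, (B *ᵥ z) q ^ 2 ≤ ∑ q : ι, (∑ r, B q r ^ 2) * ∑ r, z r ^ 2 :=
        sum_le_sum fun q _ => sum_mul_sq_le_sq_mul_sq _ _ _
    _ ≤ ∑ _q : ι, (∑ _r : ι, b ^ 2) * ∑ r, z r ^ 2 :=
        sum_le_sum fun q _ => mul_le_mul_of_nonneg_right
          (sum_le_sum fun r _ => sq_le_sq.2 ((hB q r).trans (le_abs_self b))) (by positivity)
    _ = (Fintype.card ι * b) ^ 2 * ∑ r, z r ^ 2 := by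
        simp only [sum_const, card_univ, nsmul_eq_mul]
        ring

end Euclidean

section Oscillation

variable {n : Type*} [Fintype n] {A : Matrix n n ℝ} {δ : ℝ}

lemma mulVec_apply_le_of_le [DecidableEq n] (hA : A ∈ rowStochastic ℝ n)
    (hδ : ∀ i j, δ ≤ A i j) {v : n → ℝ} {b : ℝ} (hv : ∀ j, v j ≤ b) (i : n) :
    (A *ᵥ v) i ≤ (1 - Fintype.card n * δ) * b + δ * ∑ j, v j := by
  calc (A *ᵥ v) i = ∑ j, (A i j - δ) * v j + δ * ∑ j, v j := by
        simp only [mulVec, dotProduct, sub_mul, sum_sub_distrib, mul_sum]; ring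
    _ ≤ ∑ j, (A i j - δ) * b + δ * ∑ j, v j := by
        gcongr with j
        · exact sub_nonneg.2 (hδ i j)
        · exact hv j
    _ = (1 - Fintype.card n * δ) * b + δ * ∑ j, v j := by
        simp [← sum_mul, sum_sub_distrib, sum_row_of_mem_rowStochastic hA i]

variable [Nonempty n]

def osc (v : n → ℝ) : ℝ := univ.sup' univ_nonempty v - univ.inf' univ_nonempty v

lemma sub_le_osc (v : n → ℝ) (i j : n) : v i - v j ≤ osc v :=
  sub_le_sub (le_sup' v (mem_univ i)) (inf'_le v (mem_univ j))

lemma abs_sub_le_osc (v : n → ℝ) (i j : n) : |v i - v j| ≤ osc v :=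
  abs_sub_le_iff.2 ⟨sub_le_osc v i j, sub_le_osc v j i⟩

lemma osc_le_of_mem_Icc {v : n → ℝ} {a b : ℝ} (hv : ∀ i, v i ∈ Set.Icc a b) : osc v ≤ b - a :=
  sub_le_sub (sup'_le _ _ fun i _ => (hv i).2) (le_inf' _ _ fun i _ => (hv i).1)

variable [DecidableEq n]

lemma osc_mulVec_le (hA : A ∈ rowStochastic ℝ n) (hδ : ∀ i j, δ ≤ A i j) (v : n → ℝ) :
    osc (A *ᵥ v) ≤ (1 - Fintype.card n * δ) * osc v := by
  have hup : ∀ i, (A *ᵥ v) i ≤ (1 - Fintype.card n * δ) * univ.sup' univ_nonempty v +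
      δ * ∑ j, v j := mulVec_apply_le_of_le hA hδ fun j => le_sup' v (mem_univ j)
  have hlow : ∀ i, (1 - Fintype.card n * δ) * univ.inf' univ_nonempty v + δ * ∑ j, v j ≤
      (A *ᵥ v) i := fun i => by
    have := mulVec_apply_le_of_le hA hδ (v := -v) (b := -univ.inf' univ_nonempty v)
      (fun j => neg_le_neg (inf'_le v (mem_univ j))) i
    simp only [mulVec_neg, Pi.neg_apply, sum_neg_distrib] at this
    linarith
  have hsup := sup'_le univ_nonempty _ fun i _ => hup i
  have hinf := le_inf' univ_nonempty _ fun i _ => hlow i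
  rw [osc, osc, mul_sub]
  linarith

lemma osc_mulVec_le_osc (hA : A ∈ rowStochastic ℝ n) (v : n → ℝ) : osc (A *ᵥ v) ≤ osc v := by
  simpa using osc_mulVec_le hA (fun i j => nonneg_of_mem_rowStochastic hA (i := i) (j := j)) v

lemma osc_pow_mulVec_le (hA : A ∈ rowStochastic ℝ n) (hδ : ∀ i j, δ ≤ A i j)
    (hθ : 0 ≤ 1 - Fintype.card n * δ) (k : ℕ) (v : n → ℝ) :
    osc ((A ^ k) *ᵥ v) ≤ (1 - Fintype.card n * δ) ^ k * osc v := by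
  induction k with
  | zero => simp
  | succ k ih =>
    rw [pow_succ', ← mulVec_mulVec, pow_succ', mul_assoc]
    exact (osc_mulVec_le hA hδ _).trans (mul_le_mul_of_nonneg_left ih hθ)

end Oscillation

lemma Matrix.vecMul_pow_eq_self {n R : Type*} [Fintype n] [DecidableEq n] [Semiring R]
    {A : Matrix n n R} {v : n → R} (h : v ᵥ* A = v) (k : ℕ) : v ᵥ* A ^ k = v := by
  induction k with
  | zero => simp
  | succ k ih => rw [pow_succ, ← vecMul_vecMul, ih, h]

lemma pow_div_le_inv_mul_rpow_pow {θ : ℝ} (h0 : 0 < θ) (h1 : θ ≤ 1) {m : ℕ} (hm : 0 < m)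
    (k : ℕ) : θ ^ (k / m) ≤ θ⁻¹ * (θ ^ (m⁻¹ : ℝ)) ^ k := by
  have hρ : (θ ^ (m⁻¹ : ℝ)) ^ m = θ := Real.rpow_inv_natCast_pow h0.le hm.ne'
  rw [le_inv_mul_iff₀ h0]
  calc θ * θ ^ (k / m) = (θ ^ (m⁻¹ : ℝ)) ^ (m * (k / m + 1)) := by
        rw [pow_mul, hρ, pow_succ']
    _ ≤ (θ ^ (m⁻¹ : ℝ)) ^ k :=
      pow_le_pow_of_le_one (by positivity) (Real.rpow_le_one h0.le h1 (by positivity))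
        (Nat.lt_mul_div_succ k hm).le

section Stationary

variable {n : Type*} [Fintype n] [Nonempty n] {π : n → ℝ}

lemma abs_apply_sub_le_osc (hπ0 : ∀ i, 0 ≤ π i) (hπ1 : ∑ i, π i = 1) {B : Matrix n n ℝ}
    (hB : π ᵥ* B = π) (i j : n) : |B i j - π j| ≤ osc (B.col j) := by
  have hπj : π j = ∑ l, π l * B l j := by
    conv_lhs => rw [← hB]
    rfl
  calc |B i j - π j| = |∑ l, π l * (B i j - B l j)| := by
        simp only [hπj, mul_sub, sum_sub_distrib, ← sum_mul, hπ1, one_mul]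
    _ ≤ ∑ l, π l * |B i j - B l j| := by
        refine (abs_sum_le_sum_abs _ _).trans_eq (sum_congr rfl fun l _ => ?_)
        rw [abs_mul, abs_of_nonneg (hπ0 l)]
    _ ≤ ∑ l, π l * osc (B.col j) := by
        gcongr with l
        · exact hπ0 l
        · exact abs_sub_le_osc (B.col j) i l
    _ = osc (B.col j) := by rw [← sum_mul, hπ1, one_mul]

variable [DecidableEq n] {A : Matrix n n ℝ}

theorem exists_abs_pow_apply_sub_le (hA : A ∈ rowStochastic ℝ n) (hprim : A.IsPrimitive)
    (hπ0 : ∀ i, 0 ≤ π i) (hπ1 : ∑ i, π i = 1) (hπA : π ᵥ* A = π) :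
    ∃ c ρ : ℝ, 0 ≤ ρ ∧ ρ < 1 ∧ ∀ k i j, |(A ^ k) i j - π j| ≤ c * ρ ^ k := by
  obtain ⟨-, m, hm, hpos⟩ := hprim
  obtain ⟨δ, hδ0, hδ⟩ : ∃ δ > 0, ∀ i j, δ ≤ (A ^ m) i j :=
    ⟨univ.inf' univ_nonempty fun q : n × n => (A ^ m) q.1 q.2,
      (lt_inf'_iff _).2 fun q _ => hpos q.1 q.2, fun i j => inf'_le _ (mem_univ (i, j))⟩
  have hcard : (Fintype.card n : ℝ) * δ ≤ 1 := by
    obtain ⟨i⟩ := ‹Nonempty n›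
    calc (Fintype.card n : ℝ) * δ = ∑ _j : n, δ := by simp
      _ ≤ ∑ j, (A ^ m) i j := sum_le_sum fun j _ => hδ i j
      _ = 1 := sum_row_of_mem_rowStochastic (pow_mem hA m) i
  -- contracting with `δ / 2` rather than `δ` keeps the factor `θ` away from `0`
  have hδ' : ∀ i j, δ / 2 ≤ (A ^ m) i j := fun i j => (half_le_self hδ0.le).trans (hδ i j)
  set θ := 1 - Fintype.card n * (δ / 2)
  have hθ0 : 0 < θ := by dsimp only [θ]; linarith
  have hθ1 : θ < 1 := sub_lt_self 1 (by positivity)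
  refine ⟨θ⁻¹, θ ^ (m⁻¹ : ℝ), by positivity, Real.rpow_lt_one hθ0.le hθ1 (by positivity),
    fun k i j => ?_⟩
  have hsplit : A ^ k = (A ^ m) ^ (k / m) * A ^ (k % m) := by
    rw [← pow_mul, ← pow_add, Nat.div_add_mod]
  have hsingle : osc (Pi.single j 1 : n → ℝ) ≤ 1 := by
    refine (osc_le_of_mem_Icc (a := 0) fun l => ?_).trans_eq (sub_zero 1)
    by_cases h : l = j <;> simp [h]
  calc |(A ^ k) i j - π j| ≤ osc ((A ^ k).col j) :=
        abs_apply_sub_le_osc hπ0 hπ1 (vecMul_pow_eq_self hπA k) i j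
    _ = osc ((A ^ m) ^ (k / m) *ᵥ (A ^ (k % m) *ᵥ Pi.single j 1)) := by
        rw [← mulVec_single_one, hsplit, mulVec_mulVec]
    _ ≤ θ ^ (k / m) * osc (A ^ (k % m) *ᵥ Pi.single j 1) :=
        osc_pow_mulVec_le (pow_mem hA m) hδ' hθ0.le _ _
    _ ≤ θ ^ (k / m) := mul_le_of_le_one_right (by positivity)
        ((osc_mulVec_le_osc (pow_mem hA _) _).trans hsingle)
    _ ≤ θ⁻¹ * (θ ^ (m⁻¹ : ℝ)) ^ k := pow_div_le_inv_mul_rpow_pow hθ0 hθ1.le hm k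

end Stationary

namespace Matrix

variable {n : Type*} [Fintype n] [DecidableEq n] {A : Matrix n n ℝ}

lemma pow_apply_pos_of_le (hA : ∀ i j, 0 ≤ A i j) (hd : ∀ i, 0 < A i i) {k l : ℕ} (hkl : k ≤ l)
    {i j : n} (h : 0 < (A ^ k) i j) : 0 < (A ^ l) i j := by
  induction l, hkl using Nat.le_induction with
  | base => exact h
  | succ l _ ih =>
    rw [pow_succ, mul_apply]
    exact sum_pos' (fun x _ => mul_nonneg (pow_apply_nonneg hA l i x) (hA x j))
      ⟨j, mem_univ j, mul_pos ih (hd j)⟩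

theorem isPrimitive_of_diag_pos (hA : ∀ i j, 0 ≤ A i j) (hd : ∀ i, 0 < A i i)
    (hirr : ∀ i j, ∃ k, 0 < (A ^ k) i j) : A.IsPrimitive := by
  choose k hk using hirr
  refine ⟨hA, univ.sup (fun q : n × n => k q.1 q.2) + 1, Nat.succ_pos _, fun i j => ?_⟩
  exact pow_apply_pos_of_le hA hd
    ((le_sup (f := fun q : n × n => k q.1 q.2) (mem_univ (i, j))).trans (Nat.le_succ _))
    (hk i j)

lemma pow_apply_le_pow_apply {B : Matrix n n ℝ} (hB : ∀ i j, 0 ≤ B i j)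
    (hBA : ∀ i j, B i j ≤ A i j) (k : ℕ) (i j : n) : (B ^ k) i j ≤ (A ^ k) i j := by
  induction k generalizing j with
  | zero => rfl
  | succ k ih =>
    rw [pow_succ, pow_succ, mul_apply, mul_apply]
    exact sum_le_sum fun l _ => mul_le_mul (ih l) (hBA l j) (hB l j)
      ((pow_apply_nonneg hB k i l).trans (ih l))

end Matrix

section Lazy

variable {n : Type*} [Fintype n] [DecidableEq n] {R : Matrix n n ℝ} {t : ℝ}

lemma lazy_mem_rowStochastic (hR : R ∈ rowStochastic ℝ n) (ht0 : 0 ≤ t) (ht1 : t ≤ 1) :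
    (1 - t) • (1 : Matrix n n ℝ) + t • R ∈ rowStochastic ℝ n :=
  convex_rowStochastic (one_mem _) hR (sub_nonneg.2 ht1) ht0 (sub_add_cancel 1 t)

lemma vecMul_lazy {π : n → ℝ} (hπ : π ᵥ* R = π) :
    π ᵥ* ((1 - t) • (1 : Matrix n n ℝ) + t • R) = π := by
  rw [vecMul_add, vecMul_smul, vecMul_smul, vecMul_one, hπ, ← add_smul, sub_add_cancel, one_smul]

theorem lazy_isPrimitive (hR : ∀ i j, 0 ≤ R i j) (hirr : ∀ i j, ∃ k, 0 < (R ^ k) i j)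
    (ht0 : 0 < t) (ht1 : t < 1) : ((1 - t) • (1 : Matrix n n ℝ) + t • R).IsPrimitive := by
  set C := (1 - t) • (1 : Matrix n n ℝ) + t • R
  have hC : ∀ i j, C i j = (1 - t) * (1 : Matrix n n ℝ) i j + t * R i j := fun i j => rfl
  have hCR : ∀ i j, t * R i j ≤ C i j := fun i j => by
    rw [hC]
    refine le_add_of_nonneg_left (mul_nonneg (sub_nonneg.2 ht1.le) ?_)
    by_cases h : i = j <;> simp [one_apply, h]
  refine isPrimitive_of_diag_pos (fun i j => (mul_nonneg ht0.le (hR i j)).trans (hCR i j))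
    (fun i => ?_) (fun i j => ?_)
  · rw [hC, one_apply_eq]; nlinarith [hR i i]
  · obtain ⟨k, hk⟩ := hirr i j
    refine ⟨k, lt_of_lt_of_le ?_ (pow_apply_le_pow_apply (B := t • R)
      (fun i j => mul_nonneg ht0.le (hR i j)) hCR k i j)⟩
    rw [smul_pow, Matrix.smul_apply, smul_eq_mul]
    positivity

end Lazy

section Projector

variable {n : Type*} [Fintype n] {A : Matrix n n ℝ} {π : n → ℝ}

lemma replicateRow_mul_of_vecMul_eq (hπA : π ᵥ* A = π) :
    replicateRow n π * A = replicateRow n π := by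
  rw [← replicateRow_vecMul, hπA]

variable [DecidableEq n]

lemma replicateRow_mem_rowStochastic (hπ0 : ∀ i, 0 ≤ π i) (hπ1 : ∑ i, π i = 1) :
    replicateRow n π ∈ rowStochastic ℝ n :=
  mem_rowStochastic_iff_sum.2 ⟨fun _ j => hπ0 j, fun _ => hπ1⟩

lemma mul_replicateRow_of_mem_rowStochastic (hA : A ∈ rowStochastic ℝ n) :
    A * replicateRow n π = replicateRow n π := by
  ext i j
  simp [mul_apply, ← sum_mul, sum_row_of_mem_rowStochastic hA i]

lemma sub_replicateRow_pow (hA : A ∈ rowStochastic ℝ n) (hπA : π ᵥ* A = π)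
    (hπ : replicateRow n π ∈ rowStochastic ℝ n) {k : ℕ} (hk : k ≠ 0) :
    (A - replicateRow n π) ^ k = A ^ k - replicateRow n π := by
  induction k with
  | zero => contradiction
  | succ k ih =>
    rcases eq_or_ne k 0 with rfl | hk
    · simp
    rw [pow_succ, ih hk, sub_mul, mul_sub, mul_sub, ← pow_succ,
      mul_replicateRow_of_mem_rowStochastic (pow_mem hA k), replicateRow_mul_of_vecMul_eq hπA,
      mul_replicateRow_of_mem_rowStochastic hπ]
    abel

lemma abs_sub_replicateRow_pow_apply_le (hA : A ∈ rowStochastic ℝ n) (hπA : π ᵥ* A = π)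
    (hπ : replicateRow n π ∈ rowStochastic ℝ n) {c ρ : ℝ} (hρ : 0 ≤ ρ)
    (hc : ∀ k i j, |(A ^ k) i j - π j| ≤ c * ρ ^ k) (k : ℕ) (i j : n) :
    |((A - replicateRow n π) ^ k) i j| ≤ max c 1 * ρ ^ k := by
  rcases eq_or_ne k 0 with rfl | hk
  · by_cases h : i = j <;> simp [one_apply, h]
  · rw [sub_replicateRow_pow hA hπA hπ hk]
    exact (hc k i j).trans (by gcongr; exact le_max_left c 1)

end Projector

section Kronecker

variable {n m : Type*} [Fintype n] [Fintype m] [DecidableEq m]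

lemma abs_kronecker_one_pow_apply_le [DecidableEq n] {M : Matrix n n ℝ} {b : ℕ → ℝ}
    (hM : ∀ k i j, |(M ^ k) i j| ≤ b k) (k : ℕ) (q r : n × m) :
    |((M ⊗ₖ (1 : Matrix m m ℝ)) ^ k) q r| ≤ b k := by
  have hpow : (M ⊗ₖ (1 : Matrix m m ℝ)) ^ k = (M ^ k) ⊗ₖ 1 := by
    induction k with
    | zero => simp
    | succ k ih => rw [pow_succ, ih, ← mul_kronecker_mul, one_mul, pow_succ]
  rw [hpow, kronecker_apply, abs_mul]
  by_cases h : q.2 = r.2 <;>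
    simp [one_apply, h, hM k q.1 r.1, (abs_nonneg _).trans (hM k q.1 r.1)]

lemma kronecker_one_mulVec_sub {A E : Matrix n n ℝ} (hAE : A * E = E) (hEE : E * E = E)
    (z : n × m → ℝ) :
    (A ⊗ₖ (1 : Matrix m m ℝ)) *ᵥ z - (E ⊗ₖ (1 : Matrix m m ℝ)) *ᵥ z =
      ((A - E) ⊗ₖ (1 : Matrix m m ℝ)) *ᵥ (z - (E ⊗ₖ (1 : Matrix m m ℝ)) *ᵥ z) := by
  rw [mulVec_sub, mulVec_mulVec, ← mul_kronecker_mul, sub_mul, hAE, hEE, sub_self,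
    zero_kronecker, zero_mulVec, sub_zero, ← sub_mulVec]
  congr 1
  ext q r
  simp [sub_mul]

end Kronecker

theorem exists_adapted_eucSeminorm {ι : Type*} [Fintype ι] [DecidableEq ι] (M : Matrix ι ι ℝ)
    {c ρ : ℝ} (hρ0 : 0 ≤ ρ) (hρ1 : ρ < 1) (hM : ∀ k i j, |(M ^ k) i j| ≤ c * ρ ^ k) :
    ∃ q : Seminorm ℝ (ι → ℝ), ∃ σ, 0 < σ ∧ σ < 1 ∧ eucSeminorm ι ≤ q ∧
      ∀ z, q (M *ᵥ z) ≤ σ * q z := by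
  obtain ⟨q, hpq, hq⟩ := (eucSeminorm ι).exists_adapted (toLin' M) (K := Fintype.card ι * c)
    hρ0 (left_lt_add_div_two.2 hρ1) fun k z => by
      simpa [eucSeminorm_apply, ← toLin'_pow, mul_assoc] using eucNorm_mulVec_le _ (hM k) z
  exact ⟨q, (ρ + 1) / 2, by positivity, add_div_two_lt_right.2 hρ1, hpq, hq⟩

lemma tendsto_of_abs_sub_le_geometric {u : ℕ → ℝ} {a c ρ : ℝ} (hρ0 : 0 ≤ ρ) (hρ1 : ρ < 1)
    (hu : ∀ k, |u k - a| ≤ c * ρ ^ k) : Tendsto u atTop (nhds a) := by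
  rw [tendsto_iff_norm_sub_tendsto_zero]
  refine squeeze_zero (fun k => norm_nonneg _) (fun k => (Real.norm_eq_abs _).trans_le (hu k)) ?_
  simpa using (tendsto_pow_atTop_nhds_zero_of_lt_one hρ0 hρ1).const_mul c

theorem stmt3_general (n p : ℕ) (hn : 1 ≤ n) (Rb : Matrix (Fin n) (Fin n) ℝ)
    (hnonneg : ∀ i j, 0 ≤ Rb i j) (hrow : ∀ i, ∑ j, Rb i j = 1)
    (hirr : ∀ i j, ∃ k : ℕ, 0 < (Rb ^ k) i j)
    (π : Fin n → ℝ) (hπpos : ∀ i, 0 < π i) (hπsum : ∑ i, π i = 1)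
    (hπstat : Matrix.vecMul π Rb = π)
    (α β : ℝ) (hα : 0 < α) (hβ : 0 < β) (hαβ1 : α * β < 1) :
    (∀ i j, Tendsto
        (fun k => ((((1 - α * β) • (1 : Matrix (Fin n) (Fin n) ℝ) + (α * β) • Rb)) ^ k) i j)
        atTop (nhds (π j))) ∧
    ∃ (N : (Fin n × Fin p → ℝ) → ℝ) (σ : ℝ),
      (∀ z w, N (z + w) ≤ N z + N w) ∧
      (∀ (a : ℝ) z, N (a • z) = |a| * N z) ∧
      (∀ z, N z = 0 ↔ z = 0) ∧
      (∀ z, eucNorm z ≤ N z) ∧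
      0 < σ ∧ σ < 1 ∧
      ∀ z, N ((((1 - α * β) • (1 : Matrix (Fin n) (Fin n) ℝ) + (α * β) • Rb)
              ⊗ₖ (1 : Matrix (Fin p) (Fin p) ℝ)).mulVec z - (VinfK n p π).mulVec z) ≤
        σ * N (z - (VinfK n p π).mulVec z) := by
  have : Nonempty (Fin n) := ⟨⟨0, hn⟩⟩
  have hab : 0 < α * β := mul_pos hα hβ
  have hR : Rb ∈ rowStochastic ℝ (Fin n) := mem_rowStochastic_iff_sum.2 ⟨hnonneg, hrow⟩
  have hC := lazy_mem_rowStochastic hR hab.le hαβ1.le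
  have hπC := vecMul_lazy (t := α * β) hπstat
  have hπ := replicateRow_mem_rowStochastic (fun i => (hπpos i).le) hπsum
  obtain ⟨c, ρ, hρ0, hρ1, hc⟩ := exists_abs_pow_apply_sub_le hC
    (lazy_isPrimitive hnonneg hirr hab hαβ1) (fun i => (hπpos i).le) hπsum hπC
  obtain ⟨q, σ, hσ0, hσ1, hpq, hq⟩ := exists_adapted_eucSeminorm _ hρ0 hρ1
    (abs_kronecker_one_pow_apply_le (m := Fin p)
      (abs_sub_replicateRow_pow_apply_le hC hπC hπ hρ0 hc))
  have hle : ∀ z, eucNorm z ≤ q z := fun z => (eucSeminorm_apply z).symm.trans_le (hpq z)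
  refine ⟨fun i j => tendsto_of_abs_sub_le_geometric hρ0 hρ1 (hc · i j), q, σ,
    map_add_le_add q, fun a z => by rw [map_smul_eq_mul, Real.norm_eq_abs],
    fun z => ⟨fun h => eucNorm_eq_zero.1 (le_antisymm (h ▸ hle z) (Real.sqrt_nonneg _)),
      fun h => h ▸ map_zero q⟩, hle, hσ0, hσ1, fun z => ?_⟩
  rw [show VinfK n p π = replicateRow (Fin n) π ⊗ₖ 1 from rfl, kronecker_one_mulVec_sub
    (mul_replicateRow_of_mem_rowStochastic hC) (mul_replicateRow_of_mem_rowStochastic hπ)]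
  exact hq _

/-- for `C̄ = (1−αβ)I_n + αβ R̄` one has `C̄^k → 1_n π^T` (entrywise), and
there exist a norm `N` on `ℝ^{np}` dominating the Euclidean norm and `σ ∈ (0,1)` with
`N(Cz − V_∞ z) ≤ σ N(z − V_∞ z)` for all `z`, where `C = C̄ ⊗ I_p`. -/
theorem stmt3 (n p : ℕ) (hn : 1 ≤ n) (hp : 1 ≤ p) (Rb : Matrix (Fin n) (Fin n) ℝ)
    (hnonneg : ∀ i j, 0 ≤ Rb i j) (hrow : ∀ i, ∑ j, Rb i j = 1)
    (hdiag : ∀ i, 0 < Rb i i)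
    (hirr : ∀ i j, ∃ k : ℕ, 0 < (Rb ^ k) i j)
    (π : Fin n → ℝ) (hπpos : ∀ i, 0 < π i) (hπsum : ∑ i, π i = 1)
    (hπstat : Matrix.vecMul π Rb = π)
    (α β : ℝ) (hα : 0 < α) (hβ : 0 < β) (hαβ1 : α * β < 1) :
    (∀ i j, Tendsto
        (fun k => ((((1 - α * β) • (1 : Matrix (Fin n) (Fin n) ℝ) + (α * β) • Rb)) ^ k) i j)
        atTop (nhds (π j))) ∧
    ∃ (N : (Fin n × Fin p → ℝ) → ℝ) (σ : ℝ),
      (∀ z w, N (z + w) ≤ N z + N w) ∧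
      (∀ (a : ℝ) z, N (a • z) = |a| * N z) ∧
      (∀ z, N z = 0 ↔ z = 0) ∧
      (∀ z, eucNorm z ≤ N z) ∧
      0 < σ ∧ σ < 1 ∧
      ∀ z, N ((((1 - α * β) • (1 : Matrix (Fin n) (Fin n) ℝ) + (α * β) • Rb)
              ⊗ₖ (1 : Matrix (Fin p) (Fin p) ℝ)).mulVec z - (VinfK n p π).mulVec z) ≤
        σ * N (z - (VinfK n p π).mulVec z) :=
  stmt3_general n p hn Rb hnonneg hrow hirr π hπpos hπsum hπstat α β hα hβ hαβ1
end

section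
/- The FRSD iterates satisfy (π^T ⊗ I_p) y(k) = 0 ∈ ℝ^p for all k ≥ 0 (equivalently V_∞ y(k) = 0), and consequently the weighted average x̂(k) = V_∞ x(k) obeys the recursion x̂(k+1) = x̂(k) − α V_∞ Ṽ(k)^{-1} ∇f(x(k)) for all k ≥ 0. -/
open Matrix Filter
open scoped Kronecker

/-- along the FRSD iterates, `(π^T ⊗ I_p) y(k) = 0` (equivalently
`V_∞ y(k) = 0`) for all `k`, and hence `x̂(k+1) = x̂(k) − α V_∞ Ṽ(k)⁻¹ ∇f(x(k))`. -/
theorem stmt8 (n p : ℕ) (hn : 1 ≤ n) (hp : 1 ≤ p) (Rb : Matrix (Fin n) (Fin n) ℝ)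
    (hnonneg : ∀ i j, 0 ≤ Rb i j) (hrow : ∀ i, ∑ j, Rb i j = 1)
    (hdiag : ∀ i, 0 < Rb i i)
    (hirr : ∀ i j, ∃ k : ℕ, 0 < (Rb ^ k) i j)
    (π : Fin n → ℝ) (hπpos : ∀ i, 0 < π i) (hπsum : ∑ i, π i = 1)
    (hπstat : Matrix.vecMul π Rb = π)
    (f : Fin n → (Fin p → ℝ) → ℝ) (g : Fin n → (Fin p → ℝ) → Fin p → ℝ)
    (μ L : ℝ) (hμ : 0 < μ) (hμL : μ ≤ L)
    (hgrad : ∀ i, IsGradient (f i) (g i))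
    (hLip : ∀ i x x', eucNorm (g i x - g i x') ≤ L * eucNorm (x - x'))
    (hsc : ∀ i x x',
      f i x + (∑ j, g i x j * (x' j - x j)) + μ / 2 * eucNorm (x' - x) ^ 2 ≤ f i x')
    (xstar : Fin p → ℝ)
    (hmin : ∀ w, ∑ i, f i xstar ≤ ∑ i, f i w)
    (huniq : ∀ w, (∀ w', ∑ i, f i w ≤ ∑ i, f i w') → w = xstar)
    (α β : ℝ) (hα0 : 0 < α) (hβ0 : 0 < β) (hαβ : α * β < 1)
    (x y : ℕ → (Fin n × Fin p → ℝ)) (hy0 : y 0 = 0)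
    (hxrec : ∀ k, x (k + 1) =
      (RK n p Rb).mulVec (x k) - α • (y k + (VtinvK n p Rb k).mulVec (gradf g (x k))))
    (hyrec : ∀ k, y (k + 1) = y k + β • ((1 - RK n p Rb).mulVec (x (k + 1))))
    :
    (∀ (k : ℕ) (j : Fin p), ∑ i, π i * y k (i, j) = 0) ∧
    (∀ k : ℕ, (VinfK n p π).mulVec (y k) = 0) ∧
    (∀ k : ℕ, (VinfK n p π).mulVec (x (k + 1)) =
      (VinfK n p π).mulVec (x k) -
        α • (VinfK n p π).mulVec ((VtinvK n p Rb k).mulVec (gradf g (x k)))) := by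

  classical
  have hπRb : ∀ m, ∑ i, π i * Rb i m = π m := by
    intro m
    have := congrFun hπstat m
    simpa [Matrix.vecMul, dotProduct] using this
  have hVinf : ∀ (v : Fin n × Fin p → ℝ) (q : Fin n × Fin p),
      (VinfK n p π).mulVec v q = ∑ i, π i * v (i, q.2) := by
    intro v q
    simp [VinfK, Matrix.mulVec, dotProduct, Fintype.sum_prod_type,
      Matrix.one_apply, mul_ite, ite_mul]
  have hRKv : ∀ (v : Fin n × Fin p → ℝ) (q : Fin n × Fin p),
      (RK n p Rb).mulVec v q = ∑ m, Rb q.1 m * v (m, q.2) := by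
    intro v q
    simp [RK, Matrix.mulVec, dotProduct, Fintype.sum_prod_type,
      Matrix.one_apply, mul_ite, ite_mul]
  have hdouble : ∀ (u : Fin n × Fin p → ℝ) (j : Fin p),
      ∑ i, π i * ∑ m, Rb i m * u (m, j) = ∑ m, π m * u (m, j) := by
    intro u j
    have h1 : ∀ i : Fin n, π i * ∑ m, Rb i m * u (m, j)
        = ∑ m, π i * Rb i m * u (m, j) := by
      intro i; rw [Finset.mul_sum]; exact Finset.sum_congr rfl fun m _ => by ring
    rw [Finset.sum_congr rfl fun i _ => h1 i, Finset.sum_comm]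
    refine Finset.sum_congr rfl fun m _ => ?_
    rw [← Finset.sum_mul, hπRb m]
  have hS : ∀ k (j : Fin p), ∑ i, π i * y k (i, j) = 0 := by
    intro k
    induction k with
    | zero => intro j; simp [hy0]
    | succ k ih =>
      intro j
      have h1 : ∀ i : Fin n, y (k+1) (i, j)
          = y k (i, j) + β * (x (k+1) (i, j) - ∑ m, Rb i m * x (k+1) (m, j)) := by
        intro i
        rw [hyrec k]
        simp [Matrix.sub_mulVec, Matrix.one_mulVec, hRKv (x (k+1)) (i, j)]
      calc ∑ i, π i * y (k+1) (i, j)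
          = ∑ i, (π i * y k (i, j)
              + β * (π i * x (k+1) (i, j) - π i * ∑ m, Rb i m * x (k+1) (m, j))) := by
            refine Finset.sum_congr rfl fun i _ => ?_; rw [h1]; ring
        _ = 0 := by
            rw [Finset.sum_add_distrib, ih j, ← Finset.mul_sum, Finset.sum_sub_distrib,
              hdouble (x (k+1)) j, sub_self, mul_zero, zero_add]
  refine ⟨hS, ?_, ?_⟩
  · intro k
    funext q
    rw [hVinf]
    exact hS k q.2
  · intro k
    funext q
    have hx1 : ∀ i : Fin n, x (k+1) (i, q.2)
        = (∑ m, Rb i m * x k (m, q.2))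
          - α * (y k (i, q.2) + (VtinvK n p Rb k).mulVec (gradf g (x k)) (i, q.2)) := by
      intro i
      rw [hxrec k]
      simp [hRKv (x k) (i, q.2), mul_add]
    rw [hVinf]
    simp only [Pi.sub_apply, Pi.smul_apply, smul_eq_mul]
    rw [hVinf, hVinf]
    calc ∑ i, π i * x (k+1) (i, q.2)
        = (∑ i, π i * ∑ m, Rb i m * x k (m, q.2))
          - α * ((∑ i, π i * y k (i, q.2))
            + ∑ i, π i * (VtinvK n p Rb k).mulVec (gradf g (x k)) (i, q.2)) := by
          have e : ∀ i : Fin n, π i * x (k+1) (i, q.2)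
              = π i * ∑ m, Rb i m * x k (m, q.2)
                - (α * (π i * y k (i, q.2))
                  + α * (π i * (VtinvK n p Rb k).mulVec (gradf g (x k)) (i, q.2))) := by
            intro i; rw [hx1 i]; ring
          rw [Finset.sum_congr rfl fun i _ => e i, Finset.sum_sub_distrib,
            Finset.sum_add_distrib, ← Finset.mul_sum, ← Finset.mul_sum, ← mul_add]
      _ = (∑ i, π i * x k (i, q.2))
          - α * ∑ i, π i * (VtinvK n p Rb k).mulVec (gradf g (x k)) (i, q.2) := by
          rw [hdouble (x k) q.2, hS k q.2, zero_add]
end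

section
/- The FRSD iterates satisfy, for all k ≥ 0, the two-step recursion x(k+2) = ((1+αβ)R + (1−αβ)I_{np}) x(k+1) − R x(k) − α (Ṽ(k+1)^{-1} ∇f(x(k+1)) − Ṽ(k)^{-1} ∇f(x(k))); that is, FRSD implicitly implements gradient tracking. -/
open Matrix Filter
open scoped Kronecker

/-- the FRSD iterates satisfy the two-step recursion
`x(k+2) = ((1+αβ)R + (1−αβ)I) x(k+1) − R x(k) − α (Ṽ(k+1)⁻¹∇f(x(k+1)) − Ṽ(k)⁻¹∇f(x(k)))`. -/
theorem stmt9 (n p : ℕ) (hn : 1 ≤ n) (hp : 1 ≤ p) (Rb : Matrix (Fin n) (Fin n) ℝ)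
    (hnonneg : ∀ i j, 0 ≤ Rb i j) (hrow : ∀ i, ∑ j, Rb i j = 1)
    (hdiag : ∀ i, 0 < Rb i i)
    (hirr : ∀ i j, ∃ k : ℕ, 0 < (Rb ^ k) i j)
    (f : Fin n → (Fin p → ℝ) → ℝ) (g : Fin n → (Fin p → ℝ) → Fin p → ℝ)
    (hgrad : ∀ i, IsGradient (f i) (g i))
    (α β : ℝ) (hα0 : 0 < α) (hβ0 : 0 < β) (hαβ : α * β < 1)
    (x y : ℕ → (Fin n × Fin p → ℝ)) (hy0 : y 0 = 0)
    (hxrec : ∀ k, x (k + 1) =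
      (RK n p Rb).mulVec (x k) - α • (y k + (VtinvK n p Rb k).mulVec (gradf g (x k))))
    (hyrec : ∀ k, y (k + 1) = y k + β • ((1 - RK n p Rb).mulVec (x (k + 1))))
    :
    ∀ k : ℕ, x (k + 2) =
      ((1 + α * β) • RK n p Rb +
          (1 - α * β) • (1 : Matrix (Fin n × Fin p) (Fin n × Fin p) ℝ)).mulVec (x (k + 1))
        - (RK n p Rb).mulVec (x k)
        - α • ((VtinvK n p Rb (k + 1)).mulVec (gradf g (x (k + 1)))
            - (VtinvK n p Rb k).mulVec (gradf g (x k))) := by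
  intro k
  have hak : α • y k =
      (RK n p Rb).mulVec (x k) - x (k + 1)
        - α • ((VtinvK n p Rb k).mulVec (gradf g (x k))) := by
    rw [hxrec k]; module
  have h2 : x (k + 2) =
      (RK n p Rb).mulVec (x (k + 1))
        - α • y k - (α * β) • ((1 - RK n p Rb).mulVec (x (k + 1)))
        - α • ((VtinvK n p Rb (k + 1)).mulVec (gradf g (x (k + 1)))) := by
    have := hxrec (k + 1)
    rw [hyrec k] at this
    rw [this]; module
  rw [h2, hak, Matrix.sub_mulVec, Matrix.one_mulVec, Matrix.add_mulVec,
    Matrix.smul_mulVec, Matrix.smul_mulVec, Matrix.one_mulVec]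
  module
end
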